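/- arXiv:1706.00655 — 3 statements merged into one kernel-verified Lean document; each statement's English description precedes it below -/
import Mathlib

section
/- For every ε = (ε₀, ε₁, …, ε_n) ∈ {1, −1}^{n+1}, the set P^ε = P₀^{ε₀} ∪ P₁^{ε₁} ∪ ⋯ ∪ P_n^{ε_n} is the positive cone of a left-order on G: G is the disjoint union of P^ε, (P^ε)⁻¹ and {1}, and P^ε P^ε ⊆ P^ε. -/
namespace GarsideOrder

variable {G : Type*} [Group G]

/-- `a ≤_R b` iff `b * a⁻¹ ∈ M`. -/
def leR (M : Submonoid G) (a b : G) : Prop := b * a⁻¹ ∈ M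

/-- `a ≤_L b` iff `a⁻¹ * b ∈ M`. -/
def leL (M : Submonoid G) (a b : G) : Prop := a⁻¹ * b ∈ M

/-- Right divisors (in `M`) of `a`. -/
def DivR (M : Submonoid G) (a : G) : Set G := {b : G | b ∈ M ∧ leR M b a}

/-- Left divisors (in `M`) of `a`. -/
def DivL (M : Submonoid G) (a : G) : Set G := {b : G | b ∈ M ∧ leL M b a}

/-- `a` is balanced if its sets of right and left divisors coincide. -/
def Balanced (M : Submonoid G) (a : G) : Prop := DivR M a = DivL M a

open Classical in
/-- The `N`-tail of `a`: the unique `b ∈ N` having the same right divisors lying in `N`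
as `a` (w.r.t. the divisibility of the ambient monoid `M`). -/
noncomputable def tail (M N : Submonoid G) (a : G) : G :=
  if h : ∃ b : G, b ∈ N ∧
      {c : G | c ∈ N ∧ leR M c a} = {c : G | c ∈ N ∧ leR M c b} then
    h.choose
  else 1

/-- Iterated stripping of alternating tails: first the `M₁`-tail, then the `N`-tail, etc. -/
noncomputable def strip (M M₁ N : Submonoid G) : ℕ → G → G
  | 0, a => a
  | i + 1, a =>
      strip M M₁ N i a *
        (tail M (if i % 2 = 0 then M₁ else N) (strip M M₁ N i a))⁻¹

/-- The breadth of `a`: the length of the alternating form of `a`, i.e. the least `p ≥ 1`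
such that stripping alternating tails `p` times reaches `1`. -/
noncomputable def bh (M M₁ N : Submonoid G) (a : G) : ℕ :=
  sInf {p : ℕ | 1 ≤ p ∧ strip M M₁ N p a = 1}

/-- The depth of `a`: `(bh a - 1)/2` if `bh a` is odd, `bh a / 2` if `bh a` is even;
in both cases this is `bh a / 2` with natural division. -/
noncomputable def dpt (M M₁ N : Submonoid G) (a : G) : ℕ := bh M M₁ N a / 2

/-- `a ∈ M` is unmovable if `Δ` does not right-divide it. -/
def Unmovable (M : Submonoid G) (Δ a : G) : Prop := a ∈ M ∧ ¬ leR M Δ a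

/-- `α` is `(H, G₁)`-negative: its `Δ`-form is `a Δ^{-k}` with `k ≥ 1` and
`dpt a < dpt (Δ^k)`. -/
def Negative (M M₁ N : Submonoid G) (Δ : G) (α : G) : Prop :=
  ∃ a : G, ∃ k : ℕ, Unmovable M Δ a ∧ 1 ≤ k ∧ α = a * (Δ ^ k)⁻¹ ∧
    dpt M M₁ N a < dpt M M₁ N (Δ ^ k)

/-- `α` is `(H, G₁)`-positive if `α⁻¹` is `(H, G₁)`-negative. -/
def Positive (M M₁ N : Submonoid G) (Δ : G) (α : G) : Prop :=
  Negative M M₁ N Δ α⁻¹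

/-- The set `Θ` of theta elements `θ^k a₀`, `k ≥ 1`, `a₀ ∈ M₁`. -/
def thetaSet (M₁ : Submonoid G) (θ : G) : Set G :=
  {x : G | ∃ k : ℕ, 1 ≤ k ∧ ∃ a₀ ∈ M₁, x = θ ^ k * a₀}

/-- `Θ̄ = Θ ∪ M₁`. -/
def thetaBar (M₁ : Submonoid G) (θ : G) : Set G := thetaSet M₁ θ ∪ (M₁ : Set G)

/-- Condition A with constant `ζ`: `dpt (Δ^k) = ζ k + 1` for all `k ≥ 1`. -/
def CondA (M M₁ N : Submonoid G) (Δ : G) (ζ : ℕ) : Prop :=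
  ∀ k : ℕ, 1 ≤ k → dpt M M₁ N (Δ ^ k) = ζ * k + 1

/-- Condition B with constant `ζ`. -/
def CondB (M M₁ N : Submonoid G) (Δ θ : G) (ζ : ℕ) : Prop :=
  ∀ a b c : G, ∀ t : ℤ,
    Unmovable M Δ a → Unmovable M Δ b →
    ¬(a ∈ thetaBar M₁ θ ∧ b ∈ thetaBar M₁ θ) →
    Unmovable M Δ c → a * b = c * Δ ^ t →
    ∃ ε : ℕ, ε ≤ 1 ∧
      (dpt M M₁ N c : ℤ) =
        (dpt M M₁ N a : ℤ) + (dpt M M₁ N b : ℤ) - (ζ : ℤ) * t - (ε : ℤ) ∧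
      ((a ∈ thetaSet M₁ θ ∨ b ∈ thetaSet M₁ θ ∨ c ∈ M₁) → ε = 1)

/-- A Garside structure with group of fractions the subgroup `car`. -/
structure IsGarsideOn (car : Subgroup G) (M : Submonoid G) (Δ : G) : Prop where
  M_sub : (M : Set G) ⊆ (car : Set G)
  delta_mem : Δ ∈ M
  units_trivial : ∀ x : G, x ∈ M → x⁻¹ ∈ M → x = 1
  noetherian : ∀ a ∈ M, ∃ n : ℕ, 1 ≤ n ∧ ∀ l : List G,
      (∀ x ∈ l, x ∈ M ∧ x ≠ 1) → l.prod = a → l.length ≤ n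
  balanced : Balanced M Δ
  div_finite : (DivR M Δ).Finite
  div_gen_monoid : Submonoid.closure (DivR M Δ) = M
  div_gen_group : Subgroup.closure (DivR M Δ) = car
  meet : ∀ a ∈ car, ∀ b ∈ car, ∃ c ∈ car, leR M c a ∧ leR M c b ∧
      ∀ d ∈ car, leR M d a → leR M d b → leR M d c
  join : ∀ a ∈ car, ∀ b ∈ car, ∃ c ∈ car, leR M a c ∧ leR M b c ∧
      ∀ d ∈ car, leR M a d → leR M b d → leR M c d

/-- The parabolic submonoid determined by `δ`: the submonoid generated by `Div(δ)`. -/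
def parM (M : Submonoid G) (δ : G) : Submonoid G := Submonoid.closure (DivR M δ)

/-- The parabolic subgroup determined by `δ`: the subgroup generated by `Div(δ)`. -/
def parG (M : Submonoid G) (δ : G) : Subgroup G := Subgroup.closure (DivR M δ)

/-- `δ` determines a parabolic substructure of `(G, M, Δ)`. -/
structure IsParabolic (M : Submonoid G) (Δ δ : G) : Prop where
  mem : δ ∈ M
  balanced : Balanced M δ
  div_eq : DivR M δ = DivR M Δ ∩ (parM M δ : Set G)

/-- The setting of Section 3: a Garside structure `(car, M, Δ)` together with two
parabolic substructures `(H, N, Λ)` (given by `lam`) and `(G₁, M₁, Δ₁)` (given by `δ1`),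
with `N ≠ M`, `M₁ ≠ M`, `N ∪ M₁` generating `M`, `Δ` central, `Δ₁` central in `G₁`. -/
structure Setting (G : Type*) [Group G] where
  car : Subgroup G
  M : Submonoid G
  Δ : G
  δ1 : G
  lam : G
  garside : IsGarsideOn car M Δ
  par1 : IsParabolic M Δ δ1
  parH : IsParabolic M Δ lam
  N_ne : parM M lam ≠ M
  M1_ne : parM M δ1 ≠ M
  unionGen : Submonoid.closure ((parM M lam : Set G) ∪ (parM M δ1 : Set G)) = M
  delta_central : ∀ g ∈ car, Δ * g = g * Δ
  delta1_central : ∀ g ∈ parG M δ1, δ1 * g = g * δ1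

namespace Setting

variable (S : Setting G)

/-- The parabolic submonoid `M₁`. -/
def M₁ : Submonoid G := parM S.M S.δ1

/-- The parabolic submonoid `N`. -/
def Nsub : Submonoid G := parM S.M S.lam

/-- The parabolic subgroup `G₁`. -/
def G₁ : Subgroup G := parG S.M S.δ1

/-- `θ = Δ Δ₁⁻¹`. -/
def theta : G := S.Δ * S.δ1⁻¹

/-- The set of `(H, G₁)`-negative elements. -/
def Neg : Set G := {α : G | Negative S.M S.M₁ S.Nsub S.Δ α}

/-- The set of `(H, G₁)`-positive elements. -/
def Pos : Set G := {α : G | α⁻¹ ∈ S.Neg}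

/-- Condition A. -/
def condA (ζ : ℕ) : Prop := CondA S.M S.M₁ S.Nsub S.Δ ζ

/-- Condition B. -/
def condB (ζ : ℕ) : Prop := CondB S.M S.M₁ S.Nsub S.Δ S.theta ζ

/-- `(H, G₁)` is a Dehornoy structure: `PP ⊆ P`, `G₁ P G₁ ⊆ P`, and the group is the
disjoint union of `P`, `P⁻¹` and `G₁`. -/
def IsDehornoy : Prop :=
  (∀ α ∈ S.Pos, ∀ β ∈ S.Pos, α * β ∈ S.Pos) ∧
  (∀ g₁ ∈ S.G₁, ∀ α ∈ S.Pos, ∀ g₂ ∈ S.G₁, g₁ * α * g₂ ∈ S.Pos) ∧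
  (∀ α ∈ S.car, α ∈ S.Pos ∨ α ∈ S.Neg ∨ α ∈ S.G₁) ∧
  (∀ α : G, ¬(α ∈ S.Pos ∧ α ∈ S.Neg)) ∧
  (∀ α : G, ¬(α ∈ S.Pos ∧ α ∈ S.G₁)) ∧
  (∀ α : G, ¬(α ∈ S.Neg ∧ α ∈ S.G₁))

end Setting

end GarsideOrder


namespace GarsideOrder

variable {G : Type*} [Group G]

lemma neg_subset_car (S : Setting G) : S.Neg ⊆ (S.car : Set G) := by
  rintro α ⟨a, k, ⟨haM, -⟩, -, rfl, -⟩
  exact mul_mem (S.garside.M_sub haM)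
    (inv_mem (pow_mem (S.garside.M_sub S.garside.delta_mem) k))

lemma pos_subset_car (S : Setting G) : S.Pos ⊆ (S.car : Set G) := by
  intro α h
  have h2 : α⁻¹ ∈ S.car := neg_subset_car S h
  simpa using inv_mem h2

lemma G₁_le_car (S : Setting G) : S.G₁ ≤ S.car := by
  rw [Setting.G₁, parG]
  exact (Subgroup.closure_le _).mpr (fun x hx => S.garside.M_sub hx.1)

lemma mem_neg_of_inv_pos (S : Setting G) {x : G} (h : x⁻¹ ∈ S.Pos) : x ∈ S.Neg := by
  have h2 : x⁻¹⁻¹ ∈ S.Neg := h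
  simpa using h2

lemma inv_mem_pos_of_neg (S : Setting G) {x : G} (h : x ∈ S.Neg) : x⁻¹ ∈ S.Pos := by
  show x⁻¹⁻¹ ∈ S.Neg
  rw [inv_inv]; exact h

end GarsideOrder

open GarsideOrder in
/-- Given a tower of Dehornoy structures `(H_{i+1}, G_{i+1})` on `G_i` (for `0 ≤ i ≤ n-1`,
`G_0 = G`) together with `G_n ≅ ℤ` generated by `αn`, for every choice of signs `ε` the set
`P^ε = P_0^{ε_0} ∪ ⋯ ∪ P_n^{ε_n}` is the positive cone of a left-order on `G`. -/
theorem statement1 {G : Type*} [Group G] (n : ℕ) (hn : 1 ≤ n)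
    (S : ℕ → Setting G)
    (h0 : (S 0).car = ⊤)
    (hchain : ∀ i : ℕ, i + 1 < n →
      (S (i + 1)).car = parG (S i).M (S i).δ1 ∧
      (S (i + 1)).M = parM (S i).M (S i).δ1 ∧
      (S (i + 1)).Δ = (S i).δ1)
    (hD : ∀ i : ℕ, i < n → (S i).IsDehornoy)
    (αn : G)
    (hgen : parG (S (n - 1)).M (S (n - 1)).δ1 = Subgroup.zpowers αn)
    (hinf : ∀ k : ℤ, αn ^ k = 1 → k = 0)
    (P : ℕ → Set G)
    (hP : ∀ i : ℕ, i < n → P i = (S i).Pos)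
    (hPn : P n = {x : G | ∃ k : ℕ, 1 ≤ k ∧ x = αn ^ k})
    (ε : ℕ → Bool) (Pε : Set G)
    (hPε : Pε = ⋃ i ∈ Finset.range (n + 1),
      (if ε i then P i else {x : G | x⁻¹ ∈ P i})) :
    (∀ x : G, x ∈ Pε ∨ x⁻¹ ∈ Pε ∨ x = 1) ∧
    (∀ x : G, ¬(x ∈ Pε ∧ x⁻¹ ∈ Pε)) ∧
    (1 : G) ∉ Pε ∧
    (∀ x ∈ Pε, ∀ y ∈ Pε, x * y ∈ Pε) :=  by
  have hQ : ∀ x : G, x ∈ Pε ↔ ∃ i, i ≤ n ∧ (if ε i then x ∈ P i else x⁻¹ ∈ P i) := by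
    intro x
    rw [hPε]
    simp only [Set.mem_iUnion, Finset.mem_range, Nat.lt_succ_iff, exists_prop]
    constructor
    · rintro ⟨i, hi, hx⟩
      refine ⟨i, hi, ?_⟩
      by_cases h : ε i = true <;> simp [h] at hx ⊢ <;> exact hx
    · rintro ⟨i, hi, hx⟩
      refine ⟨i, hi, ?_⟩
      by_cases h : ε i = true <;> simp [h] at hx ⊢ <;> exact hx
  have hG₁sub : ∀ m, m < n → ∀ k, k ≤ m → ((S m).G₁ : Set G) ⊆ ((S k).G₁ : Set G) := by
    intro m
    induction m with
    | zero =>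
      intro _ k hk
      have : k = 0 := Nat.le_zero.mp hk
      subst this; exact subset_rfl
    | succ m ih =>
      intro hm k hk
      rcases Nat.eq_or_lt_of_le hk with heq | hk'
      · subst heq; exact subset_rfl
      · have hk2 : k ≤ m := Nat.lt_succ_iff.mp hk'
        have h1 : ((S (m+1)).G₁ : Set G) ⊆ ((S (m+1)).car : Set G) := G₁_le_car _
        have h2 : (S (m+1)).car = (S m).G₁ := (hchain m hm).1
        intro x hx
        have hx1 : x ∈ (S (m+1)).car := h1 hx
        have hx2 : x ∈ ((S m).G₁ : Set G) := by rw [← h2]; exact hx1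
        exact ih (by omega) k hk2 hx2
  have hPj : ∀ j, 0 < j → j ≤ n → P j ⊆ ((S (j-1)).G₁ : Set G) := by
    intro j hj hjn
    rcases eq_or_lt_of_le hjn with heq | hlt
    · subst heq
      rw [hPn]
      rintro x ⟨k, hk, rfl⟩
      have hg : (S (j-1)).G₁ = Subgroup.zpowers αn := hgen
      show αn ^ k ∈ (S (j-1)).G₁
      rw [hg]
      exact pow_mem (Subgroup.mem_zpowers αn) k
    · have hj1 : j - 1 + 1 = j := by omega
      rw [hP j hlt]
      intro x hx
      have hx1 : x ∈ (S j).car := pos_subset_car _ hx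
      have hx2 : x ∈ (S (j-1+1)).car := by rw [hj1]; exact hx1
      have h2 : (S (j-1+1)).car = (S (j-1)).G₁ := (hchain (j-1) (by omega)).1
      show x ∈ (S (j-1)).G₁
      rw [← h2]; exact hx2
  have hC : ∀ i j, i < j → j ≤ n → P j ⊆ ((S i).G₁ : Set G) := by
    intro i j hij hjn x hx
    exact hG₁sub (j-1) (by omega) i (by omega) (hPj j (by omega) hjn hx)
  have hSame : ∀ i, i ≤ n → ∀ x : G, x ∈ P i → x⁻¹ ∈ P i → False := by
    intro i hi x hx hxi
    rcases eq_or_lt_of_le hi with heq | hlt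
    · subst heq
      rw [hPn] at hx hxi
      obtain ⟨k, hk, hxe⟩ := hx
      obtain ⟨m, hm, hxie⟩ := hxi
      have h1 : αn ^ (k + m) = 1 := by
        rw [pow_add, ← hxe, ← hxie, mul_inv_cancel]
      have h0' := hinf ((k + m : ℕ) : ℤ) (by rw [zpow_natCast]; exact h1)
      omega
    · rw [hP i hlt] at hx hxi
      exact (hD i hlt).2.2.2.1 x ⟨hx, mem_neg_of_inv_pos _ hxi⟩
  have hCross : ∀ i j x, i < j → j ≤ n →
      (x ∈ P i ∨ x⁻¹ ∈ P i) → (x ∈ P j ∨ x⁻¹ ∈ P j) → False := by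
    intro i j x hij hjn hA hB
    have hin : i < n := by omega
    have hxG : x ∈ (S i).G₁ := by
      rcases hB with h | h
      · exact hC i j hij hjn h
      · exact inv_mem_iff.mp (hC i j hij hjn h)
    rcases hA with h | h
    · rw [hP i hin] at h
      exact (hD i hin).2.2.2.2.1 x ⟨h, hxG⟩
    · rw [hP i hin] at h
      exact (hD i hin).2.2.2.2.2 x ⟨mem_neg_of_inv_pos _ h, hxG⟩
  have hNotOne : ∀ i, i ≤ n → (1 : G) ∉ P i := by
    intro i hi h
    rcases eq_or_lt_of_le hi with heq | hlt
    · subst heq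
      rw [hPn] at h
      obtain ⟨k, hk, hke⟩ := h
      have := hinf (k : ℤ) (by rw [zpow_natCast, ← hke])
      omega
    · rw [hP i hlt] at h
      exact (hD i hlt).2.2.2.2.1 1 ⟨h, one_mem _⟩
  have hF : ∀ d i x, n - i = d → i < n → x ∈ (S i).car → x ≠ 1 →
      ∃ j, j ≤ n ∧ (x ∈ P j ∨ x⁻¹ ∈ P j) := by
    intro d
    induction d using Nat.strong_induction_on with
    | _ d ih =>
      intro i x hd hin hx hx1
      rcases (hD i hin).2.2.1 x hx with h | h | h
      · exact ⟨i, by omega, Or.inl (by rw [hP i hin]; exact h)⟩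
      · exact ⟨i, by omega, Or.inr (by rw [hP i hin]; exact inv_mem_pos_of_neg _ h)⟩
      · by_cases hi1 : i + 1 < n
        · have hx2 : x ∈ (S (i+1)).car := by
            have h2 : (S (i+1)).car = (S i).G₁ := (hchain i hi1).1
            rw [h2]; exact h
          exact ih (n - (i+1)) (by omega) (i+1) x rfl hi1 hx2 hx1
        · have hi2 : i = n - 1 := by omega
          have hz : x ∈ Subgroup.zpowers αn := by
            rw [← hgen]
            rw [hi2] at h
            exact h
          obtain ⟨k, hk⟩ := Subgroup.mem_zpowers_iff.mp hz
          have hk0 : k ≠ 0 := by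
            intro h0'
            exact hx1 (by rw [← hk, h0', zpow_zero])
          rcases lt_or_gt_of_ne hk0 with hneg | hpos
          · refine ⟨n, le_rfl, Or.inr ?_⟩
            rw [hPn]
            refine ⟨(-k).toNat, by omega, ?_⟩
            rw [← zpow_natCast, Int.toNat_of_nonneg (by omega), zpow_neg, hk]
          · refine ⟨n, le_rfl, Or.inl ?_⟩
            rw [hPn]
            refine ⟨k.toNat, by omega, ?_⟩
            rw [← zpow_natCast, Int.toNat_of_nonneg (by omega), hk]
  refine ⟨?_, ?_, ?_, ?_⟩
  · intro x
    by_cases hx1 : x = 1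
    · exact Or.inr (Or.inr hx1)
    · have hxc : x ∈ (S 0).car := by rw [h0]; exact Subgroup.mem_top x
      obtain ⟨j, hj, hor⟩ := hF (n - 0) 0 x rfl (by omega) hxc hx1
      rcases hor with h | h
      · by_cases he : ε j = true
        · exact Or.inl ((hQ x).mpr ⟨j, hj, by rw [if_pos he]; exact h⟩)
        · exact Or.inr (Or.inl ((hQ x⁻¹).mpr ⟨j, hj, by
            rw [if_neg he, inv_inv]; exact h⟩))
      · by_cases he : ε j = true
        · exact Or.inr (Or.inl ((hQ x⁻¹).mpr ⟨j, hj, by rw [if_pos he]; exact h⟩))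
        · exact Or.inl ((hQ x).mpr ⟨j, hj, by rw [if_neg he]; exact h⟩)
  · rintro x ⟨hx, hxi⟩
    obtain ⟨i, hi, hxP⟩ := (hQ x).mp hx
    obtain ⟨j, hj, hyP⟩ := (hQ x⁻¹).mp hxi
    have hA : x ∈ P i ∨ x⁻¹ ∈ P i := by
      by_cases he : ε i = true
      · rw [if_pos he] at hxP; exact Or.inl hxP
      · rw [if_neg he] at hxP; exact Or.inr hxP
    have hB : x ∈ P j ∨ x⁻¹ ∈ P j := by
      by_cases he : ε j = true
      · rw [if_pos he] at hyP; exact Or.inr hyP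
      · rw [if_neg he, inv_inv] at hyP; exact Or.inl hyP
    rcases lt_trichotomy i j with h | rfl | h
    · exact hCross i j x h hj hA hB
    · by_cases he : ε i = true
      · rw [if_pos he] at hxP hyP; exact hSame i hi x hxP hyP
      · rw [if_neg he] at hxP hyP
        rw [inv_inv] at hyP
        exact hSame i hi x hyP hxP
    · exact hCross j i x h hi hB hA
  · intro h
    obtain ⟨i, hi, hP1⟩ := (hQ 1).mp h
    have h1 : (1 : G) ∈ P i := by
      by_cases he : ε i = true
      · rwa [if_pos he] at hP1
      · rw [if_neg he, inv_one] at hP1; exact hP1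
    exact hNotOne i hi h1
  · intro x hx y hy
    obtain ⟨i, hi, hxP⟩ := (hQ x).mp hx
    obtain ⟨j, hj, hyP⟩ := (hQ y).mp hy
    rcases lt_trichotomy i j with hij | rfl | hij
    · have hin : i < n := by omega
      have hyG : y ∈ (S i).G₁ := by
        by_cases he : ε j = true
        · rw [if_pos he] at hyP; exact hC i j hij hj hyP
        · rw [if_neg he] at hyP; exact inv_mem_iff.mp (hC i j hij hj hyP)
      refine (hQ _).mpr ⟨i, hi, ?_⟩
      by_cases he : ε i = true
      · rw [if_pos he] at hxP ⊢
        rw [hP i hin] at hxP ⊢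
        have h2 := (hD i hin).2.1 1 (one_mem _) x hxP y hyG
        simpa using h2
      · rw [if_neg he] at hxP ⊢
        rw [hP i hin] at hxP ⊢
        have h2 := (hD i hin).2.1 y⁻¹ (inv_mem hyG) x⁻¹ hxP 1 (one_mem _)
        rw [mul_inv_rev]
        simpa using h2
    · rcases eq_or_lt_of_le hi with heq | hlt
      · subst heq
        refine (hQ _).mpr ⟨i, le_rfl, ?_⟩
        by_cases he : ε i = true
        · rw [if_pos he] at hxP hyP ⊢
          rw [hPn] at hxP hyP ⊢
          obtain ⟨k, hk, rfl⟩ := hxP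
          obtain ⟨m, hm, rfl⟩ := hyP
          exact ⟨k + m, by omega, (pow_add αn k m).symm⟩
        · rw [if_neg he] at hxP hyP ⊢
          rw [hPn] at hxP hyP ⊢
          obtain ⟨k, hk, hk'⟩ := hxP
          obtain ⟨m, hm, hm'⟩ := hyP
          exact ⟨m + k, by omega, by rw [mul_inv_rev, hk', hm', pow_add]⟩
      · refine (hQ _).mpr ⟨i, hi, ?_⟩
        by_cases he : ε i = true
        · rw [if_pos he] at hxP hyP ⊢
          rw [hP i hlt] at hxP hyP ⊢
          exact (hD i hlt).1 x hxP y hyP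
        · rw [if_neg he] at hxP hyP ⊢
          rw [hP i hlt] at hxP hyP ⊢
          rw [mul_inv_rev]
          exact (hD i hlt).1 y⁻¹ hyP x⁻¹ hxP
    · have hjn : j < n := by omega
      have hxG : x ∈ (S j).G₁ := by
        by_cases he : ε i = true
        · rw [if_pos he] at hxP; exact hC j i hij hi hxP
        · rw [if_neg he] at hxP; exact inv_mem_iff.mp (hC j i hij hi hxP)
      refine (hQ _).mpr ⟨j, hj, ?_⟩
      by_cases he : ε j = true
      · rw [if_pos he] at hyP ⊢
        rw [hP j hjn] at hyP ⊢
        have h2 := (hD j hjn).2.1 x hxG y hyP 1 (one_mem _)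
        simpa using h2
      · rw [if_neg he] at hyP ⊢
        rw [hP j hjn] at hyP ⊢
        have h2 := (hD j hjn).2.1 1 (one_mem _) y⁻¹ hyP x⁻¹ (inv_mem hxG)
        rw [mul_inv_rev]
        simpa using h2
end

section
/- For every a ∈ M₁, θ ∧_R a = 1 and θ ∨_R a = θa = aθ. -/
/-!
Both `θ ∧_R a = 1` and `θ ∨_R a = θa` pass from `a₁, a₂ ∈ M₁` to `a₁a₂`, because `θ` commutes
with `M₁` and `≤_R` is invariant under right multiplication; so it suffices to treat a generator
`s ∈ Div(Δ₁)`. There everything reduces to one observation: if `b ∈ M₁` and `bΔ₁ ≤_R Δ`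
(equivalently `b ≤_R θ`), then `bΔ₁ ∈ Div(Δ) ∩ M₁ = Div(Δ₁)`, so `b` is invertible in `M`;
likewise on the left, using that `Δ` and `Δ₁` are balanced.
-/

namespace GarsideOrder

variable {G : Type*} [Group G] {M : Submonoid G} {a b c g Δ δ : G}

theorem one_leR_iff : leR M 1 a ↔ a ∈ M := by
  simp [leR]

theorem leR_one_iff : leR M a 1 ↔ a⁻¹ ∈ M := by
  simp [leR]

theorem leR_trans (hab : leR M a b) (hbc : leR M b c) : leR M a c := by
  simpa [leR, mul_assoc] using M.mul_mem hbc hab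

theorem leR_mul_left (hg : g ∈ M) (a : G) : leR M a (g * a) := by
  simpa [leR] using hg

theorem leR_mul_inv_iff_mul_leR : leR M a (b * g⁻¹) ↔ leR M (a * g) b := by
  simp [leR, mul_assoc]

theorem mul_inv_leR_iff_leR_mul : leR M (a * g⁻¹) b ↔ leR M a (b * g) := by
  simp [leR, mul_assoc]

theorem leL_trans (hab : leL M a b) (hbc : leL M b c) : leL M a c := by
  simpa [leL, mul_assoc] using M.mul_mem hab hbc

theorem parM_le : parM M δ ≤ M :=
  Submonoid.closure_le.mpr fun _ hx => hx.1

theorem IsParabolic.mem_divR_self (hδ : IsParabolic M Δ δ) : δ ∈ DivR M δ :=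
  ⟨hδ.mem, by simp [leR, M.one_mem]⟩

/-- Right-multiplying by `δ` turns a right divisor `b ∈ M_δ` of `Δδ⁻¹` into an element of
`Div(Δ) ∩ M_δ = Div(δ)`, so `δ` is a right multiple of `bδ`. -/
theorem IsParabolic.inv_mem_of_leR (hδ : IsParabolic M Δ δ) (hb : b ∈ parM M δ)
    (h : leR M b (Δ * δ⁻¹)) : b⁻¹ ∈ M := by
  have hbδ : b * δ ∈ DivR M δ := by
    rw [hδ.div_eq]
    refine ⟨⟨M.mul_mem (parM_le hb) hδ.mem, ?_⟩,
      (parM M δ).mul_mem hb (Submonoid.subset_closure hδ.mem_divR_self)⟩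
    simpa [leR, mul_assoc] using h
  simpa [leR] using hbδ.2

theorem IsParabolic.inv_mem_of_leL (hδ : IsParabolic M Δ δ) (hΔ : Balanced M Δ)
    (hb : b ∈ parM M δ) (h : leL M b (δ⁻¹ * Δ)) : b⁻¹ ∈ M := by
  have hδb : δ * b ∈ DivL M δ := by
    rw [← hδ.balanced, hδ.div_eq, hΔ]
    refine ⟨⟨M.mul_mem hδ.mem (parM_le hb), ?_⟩,
      (parM M δ).mul_mem (Submonoid.subset_closure hδ.mem_divR_self) hb⟩
    simpa [leL, mul_assoc] using h
  simpa [leL] using hδb.2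

namespace Setting

variable (S : Setting G)

theorem M₁_le : S.M₁ ≤ S.M := parM_le

theorem theta_mem : S.theta ∈ S.M := by
  have h := S.par1.mem_divR_self
  rw [S.par1.div_eq] at h
  exact h.1.2

variable {S}

theorem exists_join (hcar : S.car = ⊤) (a b : G) :
    ∃ c, leR S.M a c ∧ leR S.M b c ∧ ∀ d, leR S.M a d → leR S.M b d → leR S.M c d := by
  obtain ⟨c, -, hac, hbc, hc⟩ := S.garside.join a (hcar ▸ trivial) b (hcar ▸ trivial)
  exact ⟨c, hac, hbc, fun d => hc d (hcar ▸ trivial)⟩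

theorem inv_delta1_mul_delta (hcar : S.car = ⊤) : S.δ1⁻¹ * S.Δ = S.theta :=
  (Commute.inv_right (S.delta_central S.δ1 (hcar ▸ trivial))).eq.symm

theorem commute_theta (hcar : S.car = ⊤) {a : G} (ha : a ∈ S.M₁) : Commute S.theta a := by
  have ha' : a ∈ S.G₁ := Submonoid.closure_le.mpr (fun _ hx => Subgroup.subset_closure hx) ha
  exact Commute.mul_left (S.delta_central a (hcar ▸ trivial))
    (Commute.inv_left (S.delta1_central a ha'))

/-- The `M₁`-generator case of `theta_meet`: a common lower bound `u` of `θ` and `s ∈ Div(Δ₁)`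
lies below `c = u ∨ 1 ∈ Div(Δ₁)`, and `c ≤ θ = ΔΔ₁⁻¹` forces `c ≤ 1`. -/
theorem leR_one_of_leR_theta_of_mem_divR (hcar : S.car = ⊤) {s u : G}
    (hs : s ∈ DivR S.M S.δ1) (huθ : leR S.M u S.theta) (hus : leR S.M u s) : leR S.M u 1 := by
  obtain ⟨c, huc, h1c, hc⟩ := exists_join hcar u 1
  have hcM : c ∈ S.M := one_leR_iff.mp h1c
  have hcδ1 : c ∈ DivR S.M S.δ1 := ⟨hcM, leR_trans (hc s hus (one_leR_iff.mpr hs.1)) hs.2⟩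
  have hcθ : leR S.M c S.theta := hc _ huθ (one_leR_iff.mpr S.theta_mem)
  exact leR_trans huc <|
    leR_one_iff.mpr (S.par1.inv_mem_of_leR (Submonoid.subset_closure hcδ1) hcθ)

theorem theta_meet (hcar : S.car = ⊤) {a : G} (ha : a ∈ S.M₁) {u : G}
    (huθ : leR S.M u S.theta) (hua : leR S.M u a) : leR S.M u 1 := by
  induction ha using Submonoid.closure_induction generalizing u with
  | mem s hs => exact leR_one_of_leR_theta_of_mem_divR hcar hs huθ hua
  | one => exact hua
  | mul a₁ a₂ ha₁ ha₂ ih₁ ih₂ =>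
    obtain ⟨c, huc, -, hc⟩ := exists_join hcar u a₂
    have hcθa₂ : leR S.M c (S.theta * a₂) := by
      refine hc _ ?_ (leR_mul_left S.theta_mem a₂)
      rw [(commute_theta hcar ha₂).eq]
      exact leR_trans huθ (leR_mul_left (S.M₁_le ha₂) _)
    have hca : leR S.M c (a₁ * a₂) := hc _ hua (leR_mul_left (S.M₁_le ha₁) a₂)
    have hca₂ : leR S.M c a₂ := by
      simpa using mul_inv_leR_iff_leR_mul.mp
        (ih₁ (mul_inv_leR_iff_leR_mul.mpr hcθa₂) (mul_inv_leR_iff_leR_mul.mpr hca))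
    exact ih₂ huθ (leR_trans huc hca₂)

/-- The `M₁`-generator case of `theta_join`: for `c = θ ∨ s`, the quotient `r = θsc⁻¹ ∈ M` is a
common left divisor of `s` and `θ = Δ₁⁻¹Δ`, and the left-handed argument for `Div(Δ₁)` makes
it trivial. -/
theorem mul_leR_of_theta_leR_of_mem_divR (hcar : S.car = ⊤) {s : G}
    (hs : s ∈ DivR S.M S.δ1) {c : G} (hθc : leR S.M S.theta c) (hsc : leR S.M s c)
    (hc : ∀ d, leR S.M S.theta d → leR S.M s d → leR S.M c d) :
    leR S.M (S.theta * s) c := by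
  have hcomm : Commute S.theta s := commute_theta hcar (Submonoid.subset_closure hs)
  have hr : S.theta * s * c⁻¹ ∈ S.M := by
    refine hc _ ?_ (leR_mul_left S.theta_mem s)
    rw [hcomm.eq]
    exact leR_mul_left hs.1 _
  have hrs : leL S.M (S.theta * s * c⁻¹) s := by
    simpa [leL, leR, mul_assoc, (Commute.inv_left hcomm).eq] using hθc
  have hrθ : leL S.M (S.theta * s * c⁻¹) (S.δ1⁻¹ * S.Δ) := by
    simpa [inv_delta1_mul_delta hcar, leL, leR, mul_assoc] using hsc
  have hrδ1 : S.theta * s * c⁻¹ ∈ DivR S.M S.δ1 := by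
    rw [S.par1.balanced] at hs ⊢
    exact ⟨hr, leL_trans hrs hs.2⟩
  simpa [leR, mul_assoc] using
    S.par1.inv_mem_of_leL S.garside.balanced (Submonoid.subset_closure hrδ1) hrθ

theorem theta_join (hcar : S.car = ⊤) {a : G} (ha : a ∈ S.M₁) {v : G}
    (hθv : leR S.M S.theta v) (hav : leR S.M a v) : leR S.M (S.theta * a) v := by
  induction ha using Submonoid.closure_induction generalizing v with
  | mem s hs =>
    obtain ⟨c, hθc, hsc, hc⟩ := exists_join hcar S.theta s
    exact leR_trans (mul_leR_of_theta_leR_of_mem_divR hcar hs hθc hsc hc) (hc v hθv hav)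
  | one => simpa using hθv
  | mul a₁ a₂ ha₁ ha₂ ih₁ ih₂ =>
    have hθa₂ : leR S.M (S.theta * a₂) v :=
      ih₂ hθv (leR_trans (leR_mul_left (S.M₁_le ha₁) a₂) hav)
    rw [← mul_assoc, ← leR_mul_inv_iff_mul_leR]
    exact ih₁ (leR_mul_inv_iff_mul_leR.mpr hθa₂) (leR_mul_inv_iff_mul_leR.mpr hav)

end Setting

end GarsideOrder

open GarsideOrder in
/-- For every `a ∈ M₁`, `θ ∧_R a = 1` and `θ ∨_R a = θ a = a θ`. -/
theorem statement2 {G : Type*} [Group G] (S : Setting G) (hcar : S.car = ⊤) :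
    ∀ a ∈ S.M₁,
      leR S.M 1 S.theta ∧ leR S.M 1 a ∧
      (∀ u : G, leR S.M u S.theta → leR S.M u a → leR S.M u 1) ∧
      S.theta * a = a * S.theta ∧
      leR S.M S.theta (S.theta * a) ∧ leR S.M a (S.theta * a) ∧
      (∀ v : G, leR S.M S.theta v → leR S.M a v → leR S.M (S.theta * a) v) := by
  intro a ha
  have hcomm := Setting.commute_theta hcar ha
  refine ⟨one_leR_iff.mpr S.theta_mem, one_leR_iff.mpr (S.M₁_le ha),
    fun _ => Setting.theta_meet hcar ha, hcomm.eq, ?_, leR_mul_left S.theta_mem a,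
    fun _ => Setting.theta_join hcar ha⟩
  rw [hcomm.eq]
  exact leR_mul_left (S.M₁_le ha) _
end

section
/- Assume that (H, G₁) satisfies Condition A with constant ζ and Condition B with constant ζ for some integer ζ ≥ 1. Then for every theta element a = θ^k a₀ with k ≥ 1 and a₀ ∈ M₁, dpt(a) = ζk + 1. -/
namespace GarsideOrder
namespace S3

variable {G : Type*} [Group G]

section Basic

variable (S : Setting G)

theorem leR_refl (a : G) : leR S.M a a := by
  simpa [leR] using S.M.one_mem

theorem leR_trans {a b c : G} (h1 : leR S.M a b) (h2 : leR S.M b c) : leR S.M a c := by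
  have e : c * b⁻¹ * (b * a⁻¹) = c * a⁻¹ := by group
  have h := S.M.mul_mem h2 h1
  rwa [e] at h

theorem mem_of_leR {a b : G} (ha : a ∈ S.M) (h : leR S.M a b) : b ∈ S.M := by
  have h2 := S.M.mul_mem h ha
  rwa [inv_mul_cancel_right] at h2

theorem eq_one_of_leR_one {a : G} (ha : a ∈ S.M) (h : leR S.M a 1) : a = 1 := by
  apply S.garside.units_trivial a ha
  simpa [leR] using h

theorem leR_antisymm {a b : G} (h1 : leR S.M a b) (h2 : leR S.M b a) : a = b := by
  have h2' : (b * a⁻¹)⁻¹ ∈ S.M := by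
    have e : (b * a⁻¹)⁻¹ = a * b⁻¹ := by group
    rw [e]; exact h2
  have h3 := S.garside.units_trivial _ h1 h2'
  exact (mul_inv_eq_one.mp h3).symm

theorem leR_mul_self {a b : G} (ha : a ∈ S.M) : leR S.M b (a * b) := by
  have e : (a * b) * b⁻¹ = a := by group
  show (a * b) * b⁻¹ ∈ S.M
  rw [e]; exact ha

theorem mem_car (hcar : S.car = ⊤) (x : G) : x ∈ S.car := by rw [hcar]; trivial

theorem exists_join (hcar : S.car = ⊤) (a b : G) :
    ∃ j : G, leR S.M a j ∧ leR S.M b j ∧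
      ∀ d : G, leR S.M a d → leR S.M b d → leR S.M j d := by
  obtain ⟨c, _, h1, h2, h3⟩ := S.garside.join a (mem_car S hcar a) b (mem_car S hcar b)
  exact ⟨c, h1, h2, fun d hda hdb => h3 d (mem_car S hcar d) hda hdb⟩

theorem delta_comm (hcar : S.car = ⊤) (g : G) : Commute S.Δ g :=
  S.delta_central g (mem_car S hcar g)

theorem conj_eq {a b : G} (h : Commute a b) : a * b * a⁻¹ = b := by
  rw [h.eq, mul_inv_cancel_right]

theorem divR_delta1_subset_M1 : DivR S.M S.δ1 ⊆ (S.M₁ : Set G) :=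
  Submonoid.subset_closure

theorem M1_le_M : S.M₁ ≤ S.M := Submonoid.closure_le.mpr (fun _ hx => hx.1)

theorem M1_mem_G1 {m : G} (hm : m ∈ S.M₁) : m ∈ S.G₁ := by
  have h : S.M₁ ≤ (S.G₁).toSubmonoid :=
    Submonoid.closure_le.mpr (fun x hx => Subgroup.subset_closure hx)
  exact h hm

theorem delta1_comm {g : G} (hg : g ∈ S.G₁) : Commute S.δ1 g := S.delta1_central g hg

theorem delta1_mem_div : S.δ1 ∈ DivR S.M S.δ1 := ⟨S.par1.mem, leR_refl S _⟩

theorem delta1_mem_M1 : S.δ1 ∈ S.M₁ := divR_delta1_subset_M1 S (delta1_mem_div S)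

theorem delta1_mem_G1 : S.δ1 ∈ S.G₁ := M1_mem_G1 S (delta1_mem_M1 S)

theorem delta1_leR_delta : leR S.M S.δ1 S.Δ := by
  have h := delta1_mem_div S
  rw [S.par1.div_eq] at h
  exact h.1.2

theorem theta_mem : S.theta ∈ S.M := delta1_leR_delta S

theorem theta_mul_delta1 : S.theta * S.δ1 = S.Δ := by
  show S.Δ * S.δ1⁻¹ * S.δ1 = S.Δ
  group

theorem comm_theta_g1 (hcar : S.car = ⊤) {g : G} (hg : g ∈ S.G₁) : Commute S.theta g := by
  have h1 : Commute S.Δ g := delta_comm S hcar g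
  have h2 : Commute S.δ1⁻¹ g := (delta1_comm S hg).inv_left
  exact h1.mul_left h2

theorem comm_theta_delta1 (hcar : S.car = ⊤) : Commute S.theta S.δ1 :=
  comm_theta_g1 S hcar (delta1_mem_G1 S)

theorem delta_pow_eq (hcar : S.car = ⊤) (k : ℕ) : S.Δ ^ k = S.theta ^ k * S.δ1 ^ k := by
  rw [← theta_mul_delta1 S, (comm_theta_delta1 S hcar).mul_pow]

theorem theta_pow_mem (k : ℕ) : S.theta ^ k ∈ S.M := pow_mem (theta_mem S) k

theorem leR_pow_pow {s t : ℕ} (h : s ≤ t) : leR S.M (S.δ1 ^ s) (S.δ1 ^ t) := by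
  obtain ⟨u, rfl⟩ := Nat.exists_eq_add_of_le h
  show S.δ1 ^ (s + u) * (S.δ1 ^ s)⁻¹ ∈ S.M
  have e : S.δ1 ^ (s + u) * (S.δ1 ^ s)⁻¹ = S.δ1 ^ u := by
    rw [pow_add]; group
  rw [e]; exact pow_mem S.par1.mem u

end Basic

end S3
end GarsideOrder
namespace GarsideOrder
namespace S3

variable {G : Type*} [Group G]

section Decomp

variable (S : Setting G)

/-- Every element of `M₁` right-divides a power of `δ1`, with quotient in `M₁`. -/
theorem exists_compl_pow {m : G} (hm : m ∈ S.M₁) :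
    ∃ s : ℕ, ∃ t ∈ S.M₁, t * m = S.δ1 ^ s := by
  have hm' : m ∈ Submonoid.closure (DivR S.M S.δ1) := hm
  clear hm
  induction hm' using Submonoid.closure_induction with
  | mem d hd =>
      refine ⟨1, S.δ1 * d⁻¹, ?_, by group⟩
      have hmem : S.δ1 * d⁻¹ ∈ DivL S.M S.δ1 := by
        refine ⟨hd.2, ?_⟩
        show (S.δ1 * d⁻¹)⁻¹ * S.δ1 ∈ S.M
        have e : (S.δ1 * d⁻¹)⁻¹ * S.δ1 = d := by group
        rw [e]; exact hd.1
      rw [← S.par1.balanced] at hmem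
      exact divR_delta1_subset_M1 S hmem
  | one => exact ⟨0, 1, S.M₁.one_mem, by group⟩
  | mul a b _ _ iha ihb =>
      obtain ⟨sa, ta, hta, ea⟩ := iha
      obtain ⟨sb, tb, htb, eb⟩ := ihb
      refine ⟨sa + sb, tb * ta, S.M₁.mul_mem htb hta, ?_⟩
      have hcm : Commute (S.δ1 ^ sa) tb :=
        (delta1_comm S (M1_mem_G1 S htb)).pow_left sa
      calc tb * ta * (a * b) = tb * (ta * a) * b := by group
        _ = tb * S.δ1 ^ sa * b := by rw [ea]
        _ = S.δ1 ^ sa * (tb * b) := by rw [← hcm.eq]; group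
        _ = S.δ1 ^ sa * S.δ1 ^ sb := by rw [eb]
        _ = S.δ1 ^ (sa + sb) := by rw [pow_add]

theorem exists_leR_pow {m : G} (hm : m ∈ S.M₁) : ∃ s : ℕ, leR S.M m (S.δ1 ^ s) := by
  obtain ⟨s, t, ht, et⟩ := exists_compl_pow S hm
  refine ⟨s, ?_⟩
  show S.δ1 ^ s * m⁻¹ ∈ S.M
  have e : S.δ1 ^ s * m⁻¹ = t := by rw [← et]; group
  rw [e]; exact M1_le_M S ht

/-- Every element of `G₁` is a fraction `δ1^{-r} m` with `m ∈ M₁`. -/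
theorem g1_decomp {v : G} (hv : v ∈ S.G₁) :
    ∃ r : ℕ, ∃ m ∈ S.M₁, S.δ1 ^ r * v = m := by
  have hv' : v ∈ Subgroup.closure (DivR S.M S.δ1) := hv
  clear hv
  induction hv' using Subgroup.closure_induction with
  | mem d hd => exact ⟨0, d, divR_delta1_subset_M1 S hd, by group⟩
  | one => exact ⟨0, 1, S.M₁.one_mem, by group⟩
  | mul a b _ _ iha ihb =>
      obtain ⟨ra, ma, hma, ea⟩ := iha
      obtain ⟨rb, mb, hmb, eb⟩ := ihb
      refine ⟨ra + rb, ma * mb, S.M₁.mul_mem hma hmb, ?_⟩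
      have hcm : Commute (S.δ1 ^ rb) ma :=
        (delta1_comm S (M1_mem_G1 S hma)).pow_left rb
      calc S.δ1 ^ (ra + rb) * (a * b) = S.δ1 ^ rb * (S.δ1 ^ ra * a) * b := by
            rw [pow_add]; group
        _ = S.δ1 ^ rb * ma * b := by rw [ea]
        _ = ma * (S.δ1 ^ rb * b) := by rw [hcm.eq]; group
        _ = ma * mb := by rw [eb]
  | inv a _ iha =>
      obtain ⟨r, m, hm, e⟩ := iha
      obtain ⟨s, t, ht, et⟩ := exists_compl_pow S hm
      refine ⟨s, S.δ1 ^ r * t, S.M₁.mul_mem (pow_mem (delta1_mem_M1 S) r) ht, ?_⟩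
      have ha' : a⁻¹ = m⁻¹ * S.δ1 ^ r := by rw [← e]; group
      rw [ha']
      have h2 : S.δ1 ^ s * m⁻¹ = t := by rw [← et]; group
      calc S.δ1 ^ s * (m⁻¹ * S.δ1 ^ r) = (S.δ1 ^ s * m⁻¹) * S.δ1 ^ r := by group
        _ = t * S.δ1 ^ r := by rw [h2]
        _ = S.δ1 ^ r * t := ((delta1_comm S (M1_mem_G1 S ht)).pow_left r).eq.symm

/-- Every nontrivial element of `M` has a nontrivial simple right divisor. -/
theorem exists_simple_div {z : G} (hz : z ∈ S.M) (h1 : z ≠ 1) :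
    ∃ d : G, d ∈ DivR S.M S.Δ ∧ d ≠ 1 ∧ leR S.M d z := by
  have hz' : z ∈ Submonoid.closure (DivR S.M S.Δ) := by
    rw [S.garside.div_gen_monoid]; exact hz
  have key : ∀ w : G, w ∈ Submonoid.closure (DivR S.M S.Δ) →
      w = 1 ∨ ∃ d : G, d ∈ DivR S.M S.Δ ∧ d ≠ 1 ∧ leR S.M d w := by
    intro w hw
    induction hw using Submonoid.closure_induction with
    | mem x hx =>
        by_cases hx1 : x = 1
        · exact Or.inl hx1
        · exact Or.inr ⟨x, hx, hx1, leR_refl S x⟩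
    | one => exact Or.inl rfl
    | mul a b ha hb iha ihb =>
        have haM : a ∈ S.M := by rw [← S.garside.div_gen_monoid]; exact ha
        rcases ihb with hb1 | ⟨d, hd, hd1, hdb⟩
        · rw [hb1, mul_one]; exact iha
        · exact Or.inr ⟨d, hd, hd1, leR_trans S hdb (leR_mul_self S haM)⟩
  rcases key z hz' with h | h
  · exact absurd h h1
  · exact h

end Decomp

end S3
end GarsideOrder
namespace GarsideOrder
namespace S3

variable {G : Type*} [Group G]

section Engine

variable (S : Setting G)

/-- No nontrivial divisor of `δ1` right-divides `θ`. -/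
theorem gt1 {g : G} (hg : g ∈ DivR S.M S.δ1) (h : leR S.M g S.theta) : g = 1 := by
  have hgM1 : g ∈ S.M₁ := divR_delta1_subset_M1 S hg
  have hgG1 : g ∈ S.G₁ := M1_mem_G1 S hgM1
  have hcomm : Commute S.δ1 g := delta1_comm S hgG1
  have hy : leR S.M (S.δ1 * g) S.Δ := by
    show S.Δ * (S.δ1 * g)⁻¹ ∈ S.M
    have e : S.Δ * (S.δ1 * g)⁻¹ = S.theta * (S.δ1 * g⁻¹ * S.δ1⁻¹) := by
      show S.Δ * (S.δ1 * g)⁻¹ = S.Δ * S.δ1⁻¹ * (S.δ1 * g⁻¹ * S.δ1⁻¹)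
      group
    rw [e, hcomm.inv_right.eq, mul_inv_cancel_right]
    exact h
  have hyDiv : S.δ1 * g ∈ DivR S.M S.δ1 := by
    rw [S.par1.div_eq]
    exact ⟨⟨S.M.mul_mem S.par1.mem (M1_le_M S hgM1), hy⟩,
      S.M₁.mul_mem (delta1_mem_M1 S) hgM1⟩
  have h2 : S.δ1 * (S.δ1 * g)⁻¹ ∈ S.M := hyDiv.2
  have e2 : S.δ1 * (S.δ1 * g)⁻¹ = S.δ1 * g⁻¹ * S.δ1⁻¹ := by group
  rw [e2, hcomm.inv_right.eq, mul_inv_cancel_right] at h2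
  exact S.garside.units_trivial g (M1_le_M S hgM1) h2

/-- A common divisor of `δ1^{s+1}` and `Δ` divides `δ1`. -/
theorem rho (hcar : S.car = ⊤) :
    ∀ s : ℕ, ∀ e : G, leR S.M e (S.δ1 ^ (s + 1)) → leR S.M e S.Δ → leR S.M e S.δ1 := by
  intro s
  induction s with
  | zero => intro e h1 _; simpa using h1
  | succ n ih =>
      intro e h1 h2
      obtain ⟨j, hj1, hj2, hjmin⟩ := exists_join S hcar e S.δ1
      have hδpow : leR S.M S.δ1 (S.δ1 ^ (n + 1 + 1)) := by
        have h0 := leR_pow_pow S (show 1 ≤ n + 1 + 1 by omega)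
        simpa using h0
      have hjpow : leR S.M j (S.δ1 ^ (n + 1 + 1)) := hjmin _ h1 hδpow
      have hjΔ : leR S.M j S.Δ := hjmin _ h2 (delta1_leR_delta S)
      have hFM : j * S.δ1⁻¹ ∈ S.M := hj2
      have hFn : leR S.M (j * S.δ1⁻¹) (S.δ1 ^ (n + 1)) := by
        show S.δ1 ^ (n + 1) * (j * S.δ1⁻¹)⁻¹ ∈ S.M
        have e1 : S.δ1 ^ (n + 1) * (j * S.δ1⁻¹)⁻¹ = S.δ1 ^ (n + 1 + 1) * j⁻¹ := by
          rw [pow_succ]; group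
        rw [e1]; exact hjpow
      have hFΔ : leR S.M (j * S.δ1⁻¹) S.Δ := by
        have hΔδ : leR S.M S.Δ (S.Δ * S.δ1) := by
          show S.Δ * S.δ1 * S.Δ⁻¹ ∈ S.M
          rw [conj_eq (delta_comm S hcar S.δ1)]
          exact S.par1.mem
        have hjΔδ : leR S.M j (S.Δ * S.δ1) := leR_trans S hjΔ hΔδ
        show S.Δ * (j * S.δ1⁻¹)⁻¹ ∈ S.M
        have e1 : S.Δ * (j * S.δ1⁻¹)⁻¹ = (S.Δ * S.δ1) * j⁻¹ := by group
        rw [e1]; exact hjΔδ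
      have hFθ : leR S.M (j * S.δ1⁻¹) S.theta := by
        show S.theta * (j * S.δ1⁻¹)⁻¹ ∈ S.M
        have e1 : S.theta * (j * S.δ1⁻¹)⁻¹ = (S.theta * S.δ1) * j⁻¹ := by group
        rw [e1, theta_mul_delta1]; exact hjΔ
      have hFδ : leR S.M (j * S.δ1⁻¹) S.δ1 := ih _ hFn hFΔ
      have hF1 : j * S.δ1⁻¹ = 1 := gt1 S ⟨hFM, hFδ⟩ hFθ
      have hjδ : j = S.δ1 := mul_inv_eq_one.mp hF1
      exact hjδ ▸ hj1

/-- Purity: divisors of powers of `δ1` lie in `M₁`. -/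
theorem mem_M1_of_bound (hcar : S.car = ⊤) :
    ∀ n : ℕ, ∀ z : G, z ∈ S.M →
    (∀ l : List G, (∀ x ∈ l, x ∈ S.M ∧ x ≠ 1) → l.prod = z → l.length ≤ n) →
    ∀ s : ℕ, leR S.M z (S.δ1 ^ s) → z ∈ S.M₁ := by
  intro n
  induction n with
  | zero =>
      intro z hz hb s _
      by_cases h1 : z = 1
      · rw [h1]; exact S.M₁.one_mem
      · exfalso
        have hlen := hb [z] (by simp [hz, h1]) (by simp)
        simp at hlen
  | succ n ih =>
      intro z hz hb s hle
      by_cases h1 : z = 1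
      · rw [h1]; exact S.M₁.one_mem
      rcases Nat.eq_zero_or_pos s with hs | hs
      · subst hs
        exact absurd (eq_one_of_leR_one S hz (by simpa using hle)) h1
      obtain ⟨d, hd, hd1, hdz⟩ := exists_simple_div S hz h1
      have hdδpow : leR S.M d (S.δ1 ^ s) := leR_trans S hdz hle
      have hdδ : leR S.M d S.δ1 := by
        obtain ⟨s', rfl⟩ : ∃ s', s = s' + 1 := ⟨s - 1, by omega⟩
        exact rho S hcar s' d hdδpow hd.2
      have hdM1 : d ∈ S.M₁ := divR_delta1_subset_M1 S ⟨hd.1, hdδ⟩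
      have hdG1 : d ∈ S.G₁ := M1_mem_G1 S hdM1
      have hz'M : z * d⁻¹ ∈ S.M := hdz
      have hz'le : leR S.M (z * d⁻¹) (S.δ1 ^ s) := by
        have t1 : leR S.M (z * d⁻¹) (S.δ1 ^ s * d⁻¹) := by
          show S.δ1 ^ s * d⁻¹ * (z * d⁻¹)⁻¹ ∈ S.M
          have e : S.δ1 ^ s * d⁻¹ * (z * d⁻¹)⁻¹ = S.δ1 ^ s * z⁻¹ := by group
          rw [e]; exact hle
        have t2 : leR S.M (S.δ1 ^ s * d⁻¹) (S.δ1 ^ s) := by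
          show S.δ1 ^ s * (S.δ1 ^ s * d⁻¹)⁻¹ ∈ S.M
          have e : S.δ1 ^ s * (S.δ1 ^ s * d⁻¹)⁻¹ = S.δ1 ^ s * d * (S.δ1 ^ s)⁻¹ := by group
          rw [e, ((delta1_comm S hdG1).pow_left s).eq, mul_inv_cancel_right]
          exact hd.1
        exact leR_trans S t1 t2
      have hb' : ∀ l : List G, (∀ x ∈ l, x ∈ S.M ∧ x ≠ 1) → l.prod = z * d⁻¹ →
          l.length ≤ n := by
        intro l hl hp
        have hlen := hb (l ++ [d]) ?_ ?_
        · simpa using hlen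
        · intro x hx
          rcases List.mem_append.mp hx with hx' | hx'
          · exact hl x hx'
          · simp only [List.mem_singleton] at hx'
            subst hx'; exact ⟨hd.1, hd1⟩
        · rw [List.prod_append, hp]; simp
      have hz'M1 : z * d⁻¹ ∈ S.M₁ := ih (z * d⁻¹) hz'M hb' s hz'le
      have hzz : z = z * d⁻¹ * d := by group
      rw [hzz]; exact S.M₁.mul_mem hz'M1 hdM1

theorem mem_M1_of_leR_pow (hcar : S.car = ⊤) {z : G} (hz : z ∈ S.M) {s : ℕ}
    (h : leR S.M z (S.δ1 ^ s)) : z ∈ S.M₁ := by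
  obtain ⟨n, _, hb⟩ := S.garside.noetherian z hz
  exact mem_M1_of_bound S hcar n z hz hb s h

/-- Divisor closedness of `M₁`. -/
theorem dc (hcar : S.car = ⊤) {x y : G} (hx : x ∈ S.M) (hy : y ∈ S.M₁)
    (h : leR S.M x y) : x ∈ S.M₁ := by
  obtain ⟨s, hs⟩ := exists_leR_pow S hy
  exact mem_M1_of_leR_pow S hcar hx (leR_trans S h hs)

/-- Purity: `M ∩ G₁ = M₁`. -/
theorem purity (hcar : S.car = ⊤) {v : G} (h1 : v ∈ S.G₁) (h2 : v ∈ S.M) :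
    v ∈ S.M₁ := by
  obtain ⟨r, m, hm, e⟩ := g1_decomp S h1
  have hle : leR S.M v m := by
    show m * v⁻¹ ∈ S.M
    have e2 : m * v⁻¹ = S.δ1 ^ r := by rw [← e]; group
    rw [e2]; exact pow_mem S.par1.mem r
  exact dc S hcar h2 hm hle

/-- The only element of `M₁` right-dividing `θ^k` is `1`. -/
theorem gt' (hcar : S.car = ⊤) :
    ∀ k : ℕ, ∀ E : G, E ∈ S.M₁ → leR S.M E (S.theta ^ k) → E = 1 := by
  intro k
  induction k with
  | zero =>
      intro E hE h
      exact eq_one_of_leR_one S (M1_le_M S hE) (by simpa using h)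
  | succ k ih =>
      intro E hE h
      have hEG1 : E ∈ S.G₁ := M1_mem_G1 S hE
      have hEM : E ∈ S.M := M1_le_M S hE
      have hcE : Commute S.δ1 E := delta1_comm S hEG1
      have hy : leR S.M (S.δ1 * E) (S.theta ^ k * S.Δ) := by
        show S.theta ^ k * S.Δ * (S.δ1 * E)⁻¹ ∈ S.M
        have e1 : S.theta ^ k * S.Δ * (S.δ1 * E)⁻¹
            = S.theta ^ k * S.theta * (S.δ1 * E⁻¹ * S.δ1⁻¹) := by
          rw [← theta_mul_delta1 S]; group
        rw [e1, hcE.inv_right.eq, mul_inv_cancel_right, ← pow_succ]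
        exact h
      obtain ⟨j, hj1, hj2, hjmin⟩ := exists_join S hcar (S.δ1 * E) S.Δ
      have hjA : leR S.M j (S.theta ^ k * S.Δ) :=
        hjmin _ hy (leR_mul_self S (theta_pow_mem S k))
      have hjB : leR S.M j (S.Δ * E) := by
        apply hjmin
        · show S.Δ * E * (S.δ1 * E)⁻¹ ∈ S.M
          have e1 : S.Δ * E * (S.δ1 * E)⁻¹ = S.Δ * S.δ1⁻¹ := by group
          rw [e1]; exact theta_mem S
        · show S.Δ * E * S.Δ⁻¹ ∈ S.M
          rw [conj_eq (delta_comm S hcar E)]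
          exact hEM
      have hFM : j * S.Δ⁻¹ ∈ S.M := hj2
      have hFθ : leR S.M (j * S.Δ⁻¹) (S.theta ^ k) := by
        show S.theta ^ k * (j * S.Δ⁻¹)⁻¹ ∈ S.M
        have e1 : S.theta ^ k * (j * S.Δ⁻¹)⁻¹ = S.theta ^ k * S.Δ * j⁻¹ := by group
        rw [e1]; exact hjA
      have hFE : leR S.M (j * S.Δ⁻¹) E := by
        show E * (j * S.Δ⁻¹)⁻¹ ∈ S.M
        have e1 : E * (j * S.Δ⁻¹)⁻¹ = E * S.Δ * j⁻¹ := by group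
        rw [e1, ← (delta_comm S hcar E).eq]
        exact hjB
      have hFM1 : j * S.Δ⁻¹ ∈ S.M₁ := dc S hcar hFM hE hFE
      have hF1 : j * S.Δ⁻¹ = 1 := ih _ hFM1 hFθ
      have hjΔ : j = S.Δ := mul_inv_eq_one.mp hF1
      have hyΔ : leR S.M (S.δ1 * E) S.Δ := hjΔ ▸ hj1
      have hyDiv : S.δ1 * E ∈ DivR S.M S.δ1 := by
        rw [S.par1.div_eq]
        exact ⟨⟨S.M.mul_mem S.par1.mem hEM, hyΔ⟩,
          S.M₁.mul_mem (delta1_mem_M1 S) hE⟩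
      have h2 : S.δ1 * (S.δ1 * E)⁻¹ ∈ S.M := hyDiv.2
      have e2 : S.δ1 * (S.δ1 * E)⁻¹ = S.δ1 * E⁻¹ * S.δ1⁻¹ := by group
      rw [e2, hcE.inv_right.eq, mul_inv_cancel_right] at h2
      exact S.garside.units_trivial E hEM h2

end Engine

end S3
end GarsideOrder
namespace GarsideOrder
namespace S3

variable {G : Type*} [Group G]

section Final

variable (S : Setting G)

/-- Core statement: the `M₁`-divisors of `θ^k m` are exactly the `M₁`-divisors of `m`. -/
theorem core (hcar : S.car = ⊤) (k : ℕ) {c m : G} (hc : c ∈ S.M₁) (hm : m ∈ S.M₁)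
    (h : leR S.M c (S.theta ^ k * m)) : leR S.M c m := by
  obtain ⟨sc, hsc⟩ := exists_leR_pow S hc
  obtain ⟨sm, hsm⟩ := exists_leR_pow S hm
  obtain ⟨D, hD1, hD2, hDmin⟩ := exists_join S hcar c m
  have hDpow : leR S.M D (S.δ1 ^ (sc + sm)) :=
    hDmin _ (leR_trans S hsc (leR_pow_pow S (by omega)))
      (leR_trans S hsm (leR_pow_pow S (by omega)))
  have hDM : D ∈ S.M := mem_of_leR S (M1_le_M S hm) hD2
  have hDM1 : D ∈ S.M₁ := mem_M1_of_leR_pow S hcar hDM hDpow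
  have hDθ : leR S.M D (S.theta ^ k * m) :=
    hDmin _ h (leR_mul_self S (theta_pow_mem S k))
  have hEM : D * m⁻¹ ∈ S.M := hD2
  have hEG1 : D * m⁻¹ ∈ S.G₁ :=
    S.G₁.mul_mem (M1_mem_G1 S hDM1) (S.G₁.inv_mem (M1_mem_G1 S hm))
  have hEM1 : D * m⁻¹ ∈ S.M₁ := purity S hcar hEG1 hEM
  have hEθ : leR S.M (D * m⁻¹) (S.theta ^ k) := by
    show S.theta ^ k * (D * m⁻¹)⁻¹ ∈ S.M
    have e1 : S.theta ^ k * (D * m⁻¹)⁻¹ = (S.theta ^ k * m) * D⁻¹ := by group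
    rw [e1]; exact hDθ
  have hE1 : D * m⁻¹ = 1 := gt' S hcar k _ hEM1 hEθ
  have hDm : D = m := mul_inv_eq_one.mp hE1
  exact hDm ▸ hD1

/-- The `M₁`-tail of `θ^k m` is `m`. -/
theorem tail_theta_pow_mul (hcar : S.car = ⊤) (k : ℕ) {m : G} (hm : m ∈ S.M₁) :
    tail S.M S.M₁ (S.theta ^ k * m) = m := by
  have hset : {c : G | c ∈ S.M₁ ∧ leR S.M c (S.theta ^ k * m)}
      = {c : G | c ∈ S.M₁ ∧ leR S.M c m} := by
    ext c
    simp only [Set.mem_setOf_eq]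
    constructor
    · rintro ⟨h1, h2⟩; exact ⟨h1, core S hcar k h1 hm h2⟩
    · rintro ⟨h1, h2⟩
      exact ⟨h1, leR_trans S h2 (leR_mul_self S (theta_pow_mem S k))⟩
  have hw : ∃ b : G, b ∈ S.M₁ ∧
      {c : G | c ∈ S.M₁ ∧ leR S.M c (S.theta ^ k * m)}
        = {c : G | c ∈ S.M₁ ∧ leR S.M c b} := ⟨m, hm, hset⟩
  unfold tail
  rw [dif_pos hw]
  obtain ⟨hb1, hbeq⟩ := hw.choose_spec
  have hbm : leR S.M hw.choose m := by
    have h1 : hw.choose ∈ {c : G | c ∈ S.M₁ ∧ leR S.M c hw.choose} :=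
      ⟨hb1, leR_refl S _⟩
    rw [← hbeq] at h1
    exact core S hcar k hb1 hm h1.2
  have hmb : leR S.M m hw.choose := by
    have h1 : m ∈ {c : G | c ∈ S.M₁ ∧ leR S.M c (S.theta ^ k * m)} :=
      ⟨hm, leR_mul_self S (theta_pow_mem S k)⟩
    rw [hbeq] at h1
    exact h1.2
  exact leR_antisymm S hbm hmb

theorem strip_succ' (M M₁ N : Submonoid G) (i : ℕ) (a : G) :
    strip M M₁ N (i + 1) a = strip M M₁ N i a *
      (tail M (if i % 2 = 0 then M₁ else N) (strip M M₁ N i a))⁻¹ := rfl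

theorem strip_one_eq (M M₁ N : Submonoid G) (a : G) :
    strip M M₁ N 1 a = a * (tail M M₁ a)⁻¹ := by
  rw [strip_succ']
  norm_num
  rfl

theorem strip_one_theta (hcar : S.car = ⊤) (k : ℕ) {m : G} (hm : m ∈ S.M₁) :
    strip S.M S.M₁ S.Nsub 1 (S.theta ^ k * m) = S.theta ^ k := by
  rw [strip_one_eq, tail_theta_pow_mul S hcar k hm, mul_inv_cancel_right]

theorem strip_congr {M M₁ N : Submonoid G} {x y : G}
    (h : strip M M₁ N 1 x = strip M M₁ N 1 y) :
    ∀ p : ℕ, strip M M₁ N (p + 1) x = strip M M₁ N (p + 1) y := by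
  intro p
  induction p with
  | zero => exact h
  | succ q ih => rw [strip_succ' M M₁ N (q + 1) x, strip_succ' M M₁ N (q + 1) y, ih]

theorem bh_congr {M M₁ N : Submonoid G} {x y : G}
    (h : strip M M₁ N 1 x = strip M M₁ N 1 y) : bh M M₁ N x = bh M M₁ N y := by
  unfold bh
  congr 1
  ext p
  simp only [Set.mem_setOf_eq]
  constructor
  · rintro ⟨hp, he⟩
    refine ⟨hp, ?_⟩
    obtain ⟨q, rfl⟩ : ∃ q, p = q + 1 := ⟨p - 1, by omega⟩
    rw [← strip_congr h q]; exact he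
  · rintro ⟨hp, he⟩
    refine ⟨hp, ?_⟩
    obtain ⟨q, rfl⟩ : ∃ q, p = q + 1 := ⟨p - 1, by omega⟩
    rw [strip_congr h q]; exact he

theorem dpt_theta (hcar : S.car = ⊤) (k : ℕ) {m : G} (hm : m ∈ S.M₁) :
    dpt S.M S.M₁ S.Nsub (S.theta ^ k * m) = dpt S.M S.M₁ S.Nsub (S.Δ ^ k) := by
  unfold dpt
  congr 1
  apply bh_congr
  rw [strip_one_theta S hcar k hm, delta_pow_eq S hcar k,
    strip_one_theta S hcar k (pow_mem (delta1_mem_M1 S) k)]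

end Final

end S3
end GarsideOrder
open GarsideOrder in
/-- Assuming Conditions A and B with constant `ζ ≥ 1`, every theta element `θ^k a₀`
(`k ≥ 1`, `a₀ ∈ M₁`) has depth `ζ k + 1`. -/
theorem statement3 {G : Type*} [Group G] (S : Setting G) (hcar : S.car = ⊤)
    (ζ : ℕ) (hζ : 1 ≤ ζ) (hA : S.condA ζ) (hB : S.condB ζ) :
    ∀ k : ℕ, 1 ≤ k → ∀ a₀ ∈ S.M₁,
      dpt S.M S.M₁ S.Nsub (S.theta ^ k * a₀) = ζ * k + 1 := by
  intro k hk a₀ ha₀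
  rw [GarsideOrder.S3.dpt_theta S hcar k ha₀]
  exact hA k hk
end
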